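/- Let x, y : ℤ → ℂ be signals with support {0,…,N-1} whose coefficient polynomials are P(z) = x[N-1]∏_{j=1}^{N-1}(z - β_j) and Q(z) = y[N-1]∏_{j=1}^{N-1}(z - γ_j), where for each j, γ_j ∈ {β_j, 1/conj(β_j)}, and |y[N-1]|² ∏_j |γ_j| = |x[N-1]|² ∏_j |β_j|. Then |ŷ(ω)| = |x̂(ω)| for all ω ∈ ℝ. -/

import Mathlib

/-!
Since `x̂(ω) = P(e)` with `e = e^{-iω}` on the unit circle, it suffices to compare the factors of
`P` and `Q` at `e`. Reflecting a root `β` to `1 / conj β` only rescales its factor: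
`|e - 1 / conj β| = |β|⁻¹ |e - β|`, so `|β_j| |e - γ_j|² = |γ_j| |e - β_j|²` for every `j`.
Multiplying these identities and using the normalisation `|y[N-1]|² ∏ |γ_j| = |x[N-1]|² ∏ |β_j|`
gives `|Q(e)|² = |P(e)|²` after cancelling `∏ |β_j|`, which is nonzero because `P(0) = x[0] ≠ 0`.
-/

open Polynomial Finset

lemma finsum_eq_sum_range_of_support {M : Type*} [AddCommMonoid M] (N : ℕ) (g : ℤ → M)
    (hg : ∀ n : ℤ, n < 0 ∨ (N : ℤ) ≤ n → g n = 0) :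
    ∑ᶠ n : ℤ, g n = ∑ k ∈ range N, g k := by
  rw [finsum_eq_finsetSum_of_support_subset _ (s := (range N).map Nat.castEmbedding),
    sum_map]
  · rfl
  · intro n hn
    have hn' : 0 ≤ n ∧ n < N := by
      by_contra h
      exact hn (hg n (by omega))
    simp only [coe_map, Set.mem_image, mem_coe, mem_range, Nat.castEmbedding_apply]
    exact ⟨n.toNat, by omega, by omega⟩

lemma finsum_mul_exp_eq_eval {N : ℕ} {x : ℤ → ℂ}
    (hx : ∀ n : ℤ, n < 0 ∨ (N : ℤ) ≤ n → x n = 0) (a : ℂ) :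
    ∑ᶠ n : ℤ, x n * Complex.exp (a * n) =
      (∑ n ∈ range N, C (x n) * X ^ n).eval (Complex.exp a) := by
  rw [finsum_eq_sum_range_of_support N _ fun n hn => by simp [hx n hn]]
  simp only [eval_finsetSum, eval_mul, eval_C, eval_pow, eval_X, Int.cast_natCast,
    ← Complex.exp_nat_mul, mul_comm a]

lemma coeff_zero_sum_range_C_mul_X_pow {R : Type*} [Semiring R] {N : ℕ} (hN : 0 < N)
    (x : ℕ → R) : (∑ n ∈ range N, C (x n) * X ^ n).coeff 0 = x 0 := by
  simp [hN]

lemma ne_zero_of_eq_C_mul_prod_X_sub_C {R : Type*} [CommRing R] {ι : Type*} {P : R[X]}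
    {a : R} {s : Finset ι} {β : ι → R} (hP : P = C a * ∏ j ∈ s, (X - C (β j)))
    (h0 : P.coeff 0 ≠ 0) {j : ι} (hj : j ∈ s) : β j ≠ 0 := by
  intro hβ
  apply h0
  rw [coeff_zero_eq_eval_zero, hP, eval_mul, eval_prod, prod_eq_zero hj (by simp [hβ]),
    mul_zero]

lemma norm_sub_inv_conj {β e : ℂ} (hβ : β ≠ 0) (he : ‖e‖ = 1) :
    ‖e - (starRingEnd ℂ β)⁻¹‖ = ‖β‖⁻¹ * ‖e - β‖ := by
  have hcβ : starRingEnd ℂ β ≠ 0 := by simpa using hβ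
  have hconj : starRingEnd ℂ e * e = 1 := by
    rw [mul_comm, Complex.mul_conj, Complex.normSq_eq_norm_sq, he]
    norm_num
  -- multiplying by `conj e`, of norm one, turns `e * conj β - 1` into `conj (β - e)`
  have hflip : starRingEnd ℂ e * (e * starRingEnd ℂ β - 1) = starRingEnd ℂ (β - e) := by
    rw [map_sub, mul_sub, mul_one, ← mul_assoc, hconj, one_mul]
  have hnum : ‖e * starRingEnd ℂ β - 1‖ = ‖e - β‖ := by
    have := congrArg norm hflip
    rw [norm_mul, Complex.norm_conj, Complex.norm_conj, he, one_mul] at this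
    rw [this, norm_sub_rev]
  rw [show e - (starRingEnd ℂ β)⁻¹ = (e * starRingEnd ℂ β - 1) / starRingEnd ℂ β by
      field_simp, norm_div, hnum, Complex.norm_conj, div_eq_inv_mul]

lemma norm_mul_norm_sub_sq_eq {β γ e : ℂ} (he : ‖e‖ = 1)
    (h : γ = β ∨ γ = (starRingEnd ℂ β)⁻¹) :
    ‖β‖ * ‖e - γ‖ ^ 2 = ‖γ‖ * ‖e - β‖ ^ 2 := by
  rcases h with rfl | rfl
  · rfl
  rcases eq_or_ne β 0 with rfl | hβ
  · simp
  have hβ' : ‖β‖ ≠ 0 := norm_ne_zero_iff.mpr hβ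
  rw [norm_sub_inv_conj hβ he, norm_inv, Complex.norm_conj]
  field_simp

lemma norm_mul_prod_sub_eq {ι : Type*} {s : Finset ι} {a b e : ℂ} {β γ : ι → ℂ}
    (he : ‖e‖ = 1) (hβ : ∀ j ∈ s, β j ≠ 0)
    (hchoice : ∀ j ∈ s, γ j = β j ∨ γ j = (starRingEnd ℂ (β j))⁻¹)
    (hnorm : ‖b‖ ^ 2 * ∏ j ∈ s, ‖γ j‖ = ‖a‖ ^ 2 * ∏ j ∈ s, ‖β j‖) :
    ‖b * ∏ j ∈ s, (e - γ j)‖ = ‖a * ∏ j ∈ s, (e - β j)‖ := by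
  have hpos : 0 < ∏ j ∈ s, ‖β j‖ := prod_pos fun j hj => norm_pos_iff.mpr (hβ j hj)
  have hfactor : (∏ j ∈ s, ‖β j‖) * ∏ j ∈ s, ‖e - γ j‖ ^ 2 =
      (∏ j ∈ s, ‖γ j‖) * ∏ j ∈ s, ‖e - β j‖ ^ 2 := by
    rw [← prod_mul_distrib, ← prod_mul_distrib]
    exact prod_congr rfl fun j hj => norm_mul_norm_sub_sq_eq he (hchoice j hj)
  rw [← sq_eq_sq₀ (norm_nonneg _) (norm_nonneg _)]
  simp only [norm_mul, norm_prod, mul_pow, ← prod_pow]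
  apply mul_left_cancel₀ hpos.ne'
  linear_combination ‖b‖ ^ 2 * hfactor + (∏ j ∈ s, ‖e - β j‖ ^ 2) * hnorm

open Polynomial in
theorem stmt15_general (N : ℕ) (x y : ℤ → ℂ)
    (hx0 : x 0 ≠ 0)
    (hxsupp : ∀ n : ℤ, n < 0 ∨ (N : ℤ) ≤ n → x n = 0)
    (hysupp : ∀ n : ℤ, n < 0 ∨ (N : ℤ) ≤ n → y n = 0)
    (β γ : ℕ → ℂ)
    (hxfact : (∑ n ∈ Finset.range N, C (x n) * X ^ n) =
      C (x ((N : ℤ) - 1)) * ∏ j ∈ Finset.range (N - 1), (X - C (β j)))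
    (hyfact : (∑ n ∈ Finset.range N, C (y n) * X ^ n) =
      C (y ((N : ℤ) - 1)) * ∏ j ∈ Finset.range (N - 1), (X - C (γ j)))
    (hchoice : ∀ j ∈ Finset.range (N - 1),
      γ j = β j ∨ γ j = ((starRingEnd ℂ) (β j))⁻¹)
    (hnorm : ‖y ((N : ℤ) - 1)‖ ^ 2 *
        ∏ j ∈ Finset.range (N - 1), ‖γ j‖ =
      ‖x ((N : ℤ) - 1)‖ ^ 2 *
        ∏ j ∈ Finset.range (N - 1), ‖β j‖)
    (ω : ℝ) :
    ‖∑ᶠ n : ℤ, y n * Complex.exp (-Complex.I * ω * n)‖ =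
      ‖∑ᶠ n : ℤ, x n * Complex.exp (-Complex.I * ω * n)‖ := by
  have hβ : ∀ j ∈ range (N - 1), β j ≠ 0 := fun j hj =>
    ne_zero_of_eq_C_mul_prod_X_sub_C hxfact
      (by rwa [coeff_zero_sum_range_C_mul_X_pow (by simp at hj; omega)]) hj
  have he : ‖Complex.exp (-Complex.I * ω)‖ = 1 := by simp [Complex.norm_exp]
  rw [finsum_mul_exp_eq_eval hysupp, finsum_mul_exp_eq_eval hxsupp, hyfact, hxfact]
  simp only [eval_mul, eval_C, eval_prod, eval_sub, eval_X]
  exact norm_mul_prod_sub_eq he hβ hchoice hnorm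

open Polynomial in
theorem stmt15 (N : ℕ) (hN : 1 ≤ N) (x y : ℤ → ℂ)
    (hx0 : x 0 ≠ 0) (hxN : x ((N : ℤ) - 1) ≠ 0)
    (hxsupp : ∀ n : ℤ, n < 0 ∨ (N : ℤ) ≤ n → x n = 0)
    (hy0 : y 0 ≠ 0) (hyN : y ((N : ℤ) - 1) ≠ 0)
    (hysupp : ∀ n : ℤ, n < 0 ∨ (N : ℤ) ≤ n → y n = 0)
    (β γ : ℕ → ℂ)
    (hxfact : (∑ n ∈ Finset.range N, C (x n) * X ^ n) =
      C (x ((N : ℤ) - 1)) * ∏ j ∈ Finset.range (N - 1), (X - C (β j)))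
    (hyfact : (∑ n ∈ Finset.range N, C (y n) * X ^ n) =
      C (y ((N : ℤ) - 1)) * ∏ j ∈ Finset.range (N - 1), (X - C (γ j)))
    (hchoice : ∀ j ∈ Finset.range (N - 1),
      γ j = β j ∨ γ j = ((starRingEnd ℂ) (β j))⁻¹)
    (hnorm : ‖y ((N : ℤ) - 1)‖ ^ 2 *
        ∏ j ∈ Finset.range (N - 1), ‖γ j‖ =
      ‖x ((N : ℤ) - 1)‖ ^ 2 *
        ∏ j ∈ Finset.range (N - 1), ‖β j‖)
    (ω : ℝ) :
    ‖∑ᶠ n : ℤ, y n * Complex.exp (-Complex.I * ω * n)‖ =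
      ‖∑ᶠ n : ℤ, x n * Complex.exp (-Complex.I * ω * n)‖ :=
  stmt15_general N x y hx0 hxsupp hysupp β γ hxfact hyfact hchoice hnorm ω
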